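/- arXiv:2402.04890 — 3 statements merged into one kernel-verified Lean document; each statement's English description precedes it below -/
import Mathlib

section
/- Let u ∈ VT_a(2k;k) and let v be any binary vector of length k obtained from u by deleting one bit and then inserting one bit. Then either v = u or v ∉ VT_a(2k;k), but not both. -/
/-!
Write `u = w.insertIdx j₁ c` and `v = w.insertIdx j₂ b` with `w = u.eraseIdx j₁`. Inserting `b`
at position `i` of `w` raises the VT syndrome by `(i + 1) b` plus the number of ones of `w` from
position `i` on, a number in `[0, |w| + 1]`. Since `|w| + 1 = k < 2k`, the syndromes of `u` and
`v` agree modulo `2k` iff these increments are equal. Equal increments force `b = c` and force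
the stretch of `w` between the two positions to be a run of `b`s, and inserting `b` anywhere
inside a run of `b`s yields the same word.
-/

/-- VT syndrome (as a natural number sum) of a binary list. -/
def vtSyn (l : List Bool) : ℕ :=
  ∑ i : Fin l.length, ((i : ℕ) + 1) * (if l.get i then 1 else 0)

theorem List.count_true_cons (b : Bool) (l : List Bool) :
    (b :: l).count true = l.count true + b.toNat := by
  cases b <;> simp

theorem List.sum_map_toNat (l : List Bool) : (l.map Bool.toNat).sum = l.count true := by
  induction l with
  | nil => rfl
  | cons a l ih => rw [List.map_cons, List.sum_cons, ih, List.count_true_cons, add_comm]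

theorem vtSyn_eq_sum_getElem (l : List Bool) :
    vtSyn l = ∑ i : Fin l.length, ((i : ℕ) + 1) * l[i].toNat := by
  simp [vtSyn, Bool.toNat, Bool.cond_eq_ite]

theorem vtSyn_cons (a : Bool) (l : List Bool) :
    vtSyn (a :: l) = a.toNat + vtSyn l + l.count true := by
  rw [vtSyn_eq_sum_getElem, vtSyn_eq_sum_getElem, ← List.sum_map_toNat,
    ← Fin.sum_univ_fun_getElem]
  show ∑ i : Fin (l.length + 1), _ = _
  rw [Fin.sum_univ_succ]
  simp only [Fin.val_zero, Fin.val_succ, Fin.getElem_fin, List.getElem_cons_zero,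
    List.getElem_cons_succ, add_mul, one_mul, Finset.sum_add_distrib]
  ring

def vtInsertIncrement (w : List Bool) (i : ℕ) (b : Bool) : ℕ :=
  (i + 1) * b.toNat + (w.drop i).count true

theorem vtInsertIncrement_cons_succ (a b : Bool) (w : List Bool) (i : ℕ) :
    vtInsertIncrement (a :: w) (i + 1) b = vtInsertIncrement w i b + b.toNat := by
  simp only [vtInsertIncrement, List.drop_succ_cons]
  ring

theorem vtInsertIncrement_le {w : List Bool} {i : ℕ} (b : Bool) (hi : i ≤ w.length) :
    vtInsertIncrement w i b ≤ w.length + 1 := by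
  have hcount := (w.drop i).count_le_length (a := true)
  rw [List.length_drop] at hcount
  unfold vtInsertIncrement
  cases b <;> simp only [Bool.toNat_false, Bool.toNat_true] <;> omega

theorem vtSyn_insertIdx (b : Bool) :
    ∀ (w : List Bool) (i : ℕ), i ≤ w.length →
      vtSyn (w.insertIdx i b) = vtSyn w + vtInsertIncrement w i b
  | w, 0, _ => by
    simp only [List.insertIdx_zero, vtSyn_cons, vtInsertIncrement, List.drop_zero]
    ring
  | [], _ + 1, h => by simp at h
  | a :: w, i + 1, h => by
    have hi : i ≤ w.length := Nat.le_of_succ_le_succ h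
    rw [List.insertIdx_succ_cons, vtSyn_cons, vtSyn_cons, vtSyn_insertIdx b w i hi,
      (List.perm_insertIdx b w hi).count_eq, List.count_true_cons, vtInsertIncrement_cons_succ]
    ring

theorem List.cons_eq_insertIdx_of_take_eq_replicate {α : Type*} {b : α} :
    ∀ {m : ℕ} {w : List α}, w.take m = replicate m b → b :: w = w.insertIdx m b
  | 0, _, _ => rfl
  | _ + 1, [], h => by simp at h
  | m + 1, x :: w, h => by
    simp only [take_succ_cons, replicate_succ, cons.injEq] at h
    rw [h.1, insertIdx_succ_cons, cons_eq_insertIdx_of_take_eq_replicate h.2]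

theorem List.insertIdx_eq_insertIdx_add_of_drop_take_eq_replicate {α : Type*} {b : α} {m : ℕ} :
    ∀ {i : ℕ} {w : List α}, (w.drop i).take m = replicate m b →
      w.insertIdx i b = w.insertIdx (i + m) b
  | 0, _, h => by simpa using cons_eq_insertIdx_of_take_eq_replicate h
  | _ + 1, [], _ => by rw [Nat.add_right_comm]; rfl
  | i + 1, x :: w, h => by
    rw [Nat.add_right_comm, insertIdx_succ_cons, insertIdx_succ_cons,
      insertIdx_eq_insertIdx_add_of_drop_take_eq_replicate (by simpa using h)]

theorem insertIdx_eq_insertIdx_add_of_vtInsertIncrement_eq {w : List Bool} {i m : ℕ}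
    {c b : Bool} (hm : i + m ≤ w.length)
    (h : vtInsertIncrement w i c = vtInsertIncrement w (i + m) b) :
    w.insertIdx i c = w.insertIdx (i + m) b := by
  set run := (w.drop i).take m
  have hlen : run.length = m := by
    simp only [run, List.length_take, List.length_drop]
    omega
  have hsplit : (w.drop i).count true = run.count true + (w.drop (i + m)).count true := by
    rw [← List.take_append_drop m (w.drop i), List.count_append, List.drop_drop]
  have hrun : ∀ b, run.count b = m → run = List.replicate m b := fun b hb => by
    rw [← hb]
    exact (List.replicate_count_eq_of_count_eq_length (hb.trans hlen.symm)).symm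
  have hcount := run.count_true_add_count_false
  unfold vtInsertIncrement at h
  rw [hsplit] at h
  obtain ⟨rfl, hb⟩ : c = b ∧ run = List.replicate m b := by
    cases c <;> cases b <;> simp only [Bool.toNat_false, Bool.toNat_true] at h
    · exact ⟨rfl, hrun false (by omega)⟩
    · omega
    · omega
    · exact ⟨rfl, hrun true (by omega)⟩
  exact List.insertIdx_eq_insertIdx_add_of_drop_take_eq_replicate hb

theorem insertIdx_eq_insertIdx_of_vtInsertIncrement_eq {w : List Bool} {i j : ℕ} {c b : Bool}
    (hi : i ≤ w.length) (hj : j ≤ w.length)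
    (h : vtInsertIncrement w i c = vtInsertIncrement w j b) :
    w.insertIdx i c = w.insertIdx j b := by
  rcases le_total i j with hij | hji
  · obtain ⟨m, rfl⟩ := Nat.exists_eq_add_of_le hij
    exact insertIdx_eq_insertIdx_add_of_vtInsertIncrement_eq hj h
  · obtain ⟨m, rfl⟩ := Nat.exists_eq_add_of_le hji
    exact (insertIdx_eq_insertIdx_add_of_vtInsertIncrement_eq hi h.symm).symm

theorem insertIdx_eq_insertIdx_iff_vtSyn_modEq {w : List Bool} {n i j : ℕ} {c b : Bool}
    (hn : w.length + 1 < n) (hi : i ≤ w.length) (hj : j ≤ w.length) :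
    w.insertIdx i c = w.insertIdx j b ↔
      vtSyn (w.insertIdx i c) ≡ vtSyn (w.insertIdx j b) [MOD n] := by
  refine ⟨fun h => by rw [h], fun h => ?_⟩
  rw [vtSyn_insertIdx c w i hi, vtSyn_insertIdx b w j hj] at h
  exact insertIdx_eq_insertIdx_of_vtInsertIncrement_eq hi hj
    ((Nat.ModEq.add_left_cancel' _ h).eq_of_lt_of_lt
      ((vtInsertIncrement_le c hi).trans_lt hn) ((vtInsertIncrement_le b hj).trans_lt hn))

theorem stmt3_general (k : ℕ) (a : ZMod (2 * k)) (u v : List Bool)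
    (hu : u.length = k) (hua : ((vtSyn u : ℕ) : ZMod (2 * k)) = a)
    (j₁ j₂ : ℕ) (b : Bool) (hj₁ : j₁ < k) (hj₂ : j₂ ≤ k - 1)
    (hv : v = (u.eraseIdx j₁).insertIdx j₂ b) :
    Xor' (v = u) (¬ ((vtSyn v : ℕ) : ZMod (2 * k)) = a) := by
  have hj₁u : j₁ < u.length := hu ▸ hj₁
  obtain ⟨w, c, hw, rfl, rfl⟩ : ∃ (w : List Bool) (c : Bool),
      w.length = k - 1 ∧ u = w.insertIdx j₁ c ∧ v = w.insertIdx j₂ b :=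
    ⟨u.eraseIdx j₁, u[j₁], by rw [List.length_eraseIdx_of_lt hj₁u, hu],
      (List.insertIdx_eraseIdx_getElem hj₁u).symm, hv⟩
  refine xor_not_right.2 ?_
  rw [← hua, ZMod.natCast_eq_natCast_iff]
  exact insertIdx_eq_insertIdx_iff_vtSyn_modEq (by omega) (by omega) (by omega)

theorem stmt3 (k : ℕ) (hk : 0 < k) (a : ZMod (2 * k)) (u v : List Bool)
    (hu : u.length = k) (hua : ((vtSyn u : ℕ) : ZMod (2 * k)) = a)
    (j₁ j₂ : ℕ) (b : Bool) (hj₁ : j₁ < k) (hj₂ : j₂ ≤ k - 1)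
    (hv : v = (u.eraseIdx j₁).insertIdx j₂ b) (hvl : v.length = k) :
    Xor' (v = u) (¬ ((vtSyn v : ℕ) : ZMod (2 * k)) = a) :=
  stmt3_general k a u v hu hua j₁ j₂ b hj₁ hj₂ hv
end

section
/- The code VT_a(k+1;k) can correct any single insdel error: for any two distinct codewords u, w ∈ VT_a(k+1;k), B^{single-insdel}(u) ∩ B^{single-insdel}(w) = ∅. -/
/-- Single-insdel ball: all strings obtainable by at most one insertion or one deletion. -/
def insdelBall (u : List Bool) : Set (List Bool) :=
  {w | w = u ∨ (∃ j < u.length, w = u.eraseIdx j) ∨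
       (∃ j ≤ u.length, ∃ b : Bool, w = u.insertIdx j b)}

def bitN (b : Bool) : ℕ := if b then 1 else 0

def cnt (l : List Bool) : ℕ := ∑ i : Fin l.length, bitN (l.get i)

lemma cnt_nil : cnt [] = 0 := rfl

lemma vtSyn_nil : vtSyn [] = 0 := rfl

lemma cnt_cons (a : Bool) (s : List Bool) : cnt (a :: s) = bitN a + cnt s := by
  simp [cnt, Fin.sum_univ_succ]

lemma vtSyn_cons_s4 (a : Bool) (s : List Bool) :
    vtSyn (a :: s) = bitN a + vtSyn s + cnt s := by
  have h : ∀ x : Fin s.length, ((x:ℕ)+1+1) * (if (a::s).get x.succ then 1 else 0)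
      = ((x:ℕ)+1) * (if s.get x then 1 else 0) + (if s.get x then 1 else 0) := by
    intro x
    have hx : (a::s).get x.succ = s.get x := rfl
    rw [hx]; ring
  simp only [vtSyn, cnt, List.length_cons, Fin.sum_univ_succ, Fin.val_zero, Fin.val_succ]
  rw [Finset.sum_congr rfl (fun x _ => h x), Finset.sum_add_distrib]
  simp [bitN]
  cases a <;> simp <;> omega

lemma cnt_le_length (l : List Bool) : cnt l ≤ l.length := by
  induction l with
  | nil => simp [cnt]
  | cons a t ih =>
    rw [cnt_cons]
    have : bitN a ≤ 1 := by cases a <;> simp [bitN]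
    simp only [List.length_cons]
    omega

lemma cnt_append (s t : List Bool) : cnt (s ++ t) = cnt s + cnt t := by
  induction s with
  | nil => simp [cnt]
  | cons a s ih => simp only [List.cons_append, cnt_cons, ih]; omega

lemma getD_false_of_cnt_zero {l : List Bool} (h : cnt l = 0) (p : ℕ) :
    l.getD p false = false := by
  induction l generalizing p with
  | nil => simp
  | cons a t ih =>
    rw [cnt_cons] at h
    have ha : a = false := by cases a <;> simp [bitN] at h ⊢
    cases p with
    | zero => simpa using ha
    | succ p => simpa using ih (by omega) p

lemma getD_true_of_cnt_len {l : List Bool} (h : cnt l = l.length) (p : ℕ)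
    (hp : p < l.length) : l.getD p false = true := by
  induction l generalizing p with
  | nil => simp at hp
  | cons a t ih =>
    rw [cnt_cons] at h
    simp only [List.length_cons] at h hp
    have hb : bitN a ≤ 1 := by cases a <;> simp [bitN]
    have hc := cnt_le_length t
    have ha : a = true := by cases a <;> simp [bitN] at h ⊢; omega
    cases p with
    | zero => simpa using ha
    | succ p =>
      have : cnt t = t.length := by
        cases a <;> simp [bitN] at h <;> omega
      simpa using ih this p (by omega)

lemma one_le_cnt {l : List Bool} {p : ℕ} (h : l.getD p false = true) : 1 ≤ cnt l := by
  induction l generalizing p with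
  | nil => simp at h
  | cons a t ih =>
    rw [cnt_cons]
    cases p with
    | zero =>
      simp at h
      simp [h, bitN]
    | succ p =>
      simp at h
      have := ih (p := p) (by simpa using h)
      omega

lemma cnt_insertIdx (l : List Bool) (b : Bool) (i : ℕ) (hi : i ≤ l.length) :
    cnt (l.insertIdx i b) = bitN b + cnt l := by
  induction l generalizing i with
  | nil =>
    have : i = 0 := by simpa using hi
    subst this
    simp [cnt_cons]
  | cons a t ih =>
    cases i with
    | zero =>
      rw [show (a::t).insertIdx 0 b = b :: a :: t from rfl, cnt_cons, cnt_cons]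
    | succ i =>
      have h1 : (a :: t).insertIdx (i+1) b = a :: t.insertIdx i b := rfl
      rw [h1, cnt_cons, cnt_cons, ih i (by simpa using hi)]
      omega

lemma vtSyn_insertIdx_s4 (l : List Bool) (b : Bool) (i : ℕ) (hi : i ≤ l.length) :
    vtSyn (l.insertIdx i b) = vtSyn l + (i+1) * bitN b + cnt (l.drop i) := by
  induction l generalizing i with
  | nil =>
    have : i = 0 := by simpa using hi
    subst this
    simp [vtSyn_cons_s4, vtSyn_nil, cnt_nil, List.drop_nil]
  | cons a t ih =>
    cases i with
    | zero =>
      show vtSyn (b :: a :: t) = _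
      rw [vtSyn_cons_s4]
      simp [cnt_cons]
      omega
    | succ i =>
      have hi' : i ≤ t.length := by simpa using hi
      have h1 : (a :: t).insertIdx (i+1) b = a :: t.insertIdx i b := rfl
      have h2 : (a :: t).drop (i+1) = t.drop i := rfl
      rw [h1, h2, vtSyn_cons_s4, vtSyn_cons_s4, ih i hi', cnt_insertIdx t b i hi']
      have : (i+1+1) * bitN b = (i+1) * bitN b + bitN b := by ring
      rw [this]
      omega

lemma insertIdx_eraseIdx_getD (l : List Bool) (i : ℕ) (hi : i < l.length) :
    (l.eraseIdx i).insertIdx i (l.getD i false) = l := by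
  induction l generalizing i with
  | nil => simp at hi
  | cons a t ih =>
    cases i with
    | zero => rfl
    | succ i =>
      have h3 : (a :: t).getD (i+1) false = t.getD i false := rfl
      show ((a :: t.eraseIdx i).insertIdx (i+1) ((a::t).getD (i+1) false)) = a :: t
      rw [h3]
      show a :: ((t.eraseIdx i).insertIdx i (t.getD i false)) = a :: t
      rw [ih i (by simpa using hi)]

lemma vtSyn_eraseIdx (l : List Bool) (i : ℕ) (hi : i < l.length) :
    vtSyn l = vtSyn (l.eraseIdx i) + (i+1) * bitN (l.getD i false) + cnt (l.drop (i+1)) := by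
  induction l generalizing i with
  | nil => simp at hi
  | cons a t ih =>
    cases i with
    | zero =>
      have h2 : (a :: t).drop 1 = t := rfl
      rw [vtSyn_cons_s4, h2]
      show _ = vtSyn t + 1 * bitN ((a::t).getD 0 false) + cnt t
      have : (a::t).getD 0 false = a := rfl
      rw [this]
      omega
    | succ i =>
      have hi' : i < t.length := by simpa using hi
      have h1 : (a :: t).eraseIdx (i+1) = a :: t.eraseIdx i := rfl
      have h2 : (a :: t).drop (i+1+1) = t.drop (i+1) := rfl
      have h3 : (a :: t).getD (i+1) false = t.getD i false := rfl
      rw [vtSyn_cons_s4, h1, h2, h3, vtSyn_cons_s4, ih i hi']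
      have h4 : cnt t = cnt (t.eraseIdx i) + bitN (t.getD i false) := by
        have h5 : (t.eraseIdx i).insertIdx i (t.getD i false) = t :=
          insertIdx_eraseIdx_getD t i hi'
        conv_lhs => rw [← h5]
        rw [cnt_insertIdx]
        · omega
        · rw [List.length_eraseIdx]
          simp [hi']
          omega
      have h6 : (i+1+1) * bitN (t.getD i false) = (i+1) * bitN (t.getD i false) + bitN (t.getD i false) := by ring
      rw [h4, h6]
      omega


lemma eraseIdx_insertIdx' (l : List Bool) (b : Bool) (i : ℕ) (hi : i ≤ l.length) :
    (l.insertIdx i b).eraseIdx i = l := by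
  induction l generalizing i with
  | nil =>
    have : i = 0 := by simpa using hi
    subst this
    rfl
  | cons a t ih =>
    cases i with
    | zero => rfl
    | succ i =>
      show a :: (t.insertIdx i b).eraseIdx i = a :: t
      rw [ih i (by simpa using hi)]

lemma drop_split (l : List Bool) (i j : ℕ) (hij : i ≤ j) :
    cnt (l.drop i) = cnt ((l.drop i).take (j - i)) + cnt (l.drop j) := by
  have h : (l.drop i).drop (j - i) = l.drop j := by
    rw [List.drop_drop, show i + (j - i) = j from by omega]
  conv_lhs => rw [← List.take_append_drop (j - i) (l.drop i)]
  rw [cnt_append, h]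

lemma getD_take_drop (l : List Bool) (i m p : ℕ) (hp : p < m) :
    ((l.drop i).take m).getD p false = l.getD (i + p) false := by
  rw [List.getD_eq_getElem?_getD, List.getD_eq_getElem?_getD, List.getElem?_take,
    if_pos hp, List.getElem?_drop]

lemma insertIdx_step (l : List Bool) (b : Bool) (j : ℕ) (hj : j < l.length)
    (hb : l.getD j false = b) : l.insertIdx j b = l.insertIdx (j+1) b := by
  induction l generalizing j with
  | nil => simp at hj
  | cons a t ih =>
    cases j with
    | zero =>
      have : a = b := by simpa using hb
      subst this
      rfl
    | succ j =>
      show a :: t.insertIdx j b = a :: t.insertIdx (j+1) b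
      rw [ih j (by simpa using hj) (by simpa using hb)]

lemma insertIdx_congr (l : List Bool) (b : Bool) (i j : ℕ) (hij : i ≤ j) (hj : j ≤ l.length)
    (hall : ∀ t, i ≤ t → t < j → l.getD t false = b) :
    l.insertIdx i b = l.insertIdx j b := by
  induction j, hij using Nat.le_induction with
  | base => rfl
  | succ j hij ih =>
    rw [ih (by omega) (fun t h1 h2 => hall t h1 (by omega))]
    exact insertIdx_step l b j (by omega) (hall j hij (by omega))

lemma eraseIdx_step (l : List Bool) (j : ℕ) (hj : j + 1 < l.length)
    (hb : l.getD j false = l.getD (j+1) false) : l.eraseIdx j = l.eraseIdx (j+1) := by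
  induction l generalizing j with
  | nil => simp at hj
  | cons a t ih =>
    cases j with
    | zero =>
      cases t with
      | nil => simp at hj
      | cons a2 t2 =>
        have : a = a2 := by simpa using hb
        subst this
        rfl
    | succ j =>
      show a :: t.eraseIdx j = a :: t.eraseIdx (j+1)
      rw [ih j (by simpa using hj) (by simpa using hb)]

lemma eraseIdx_congr (l : List Bool) (i j : ℕ) (hij : i ≤ j) (hj : j < l.length)
    (hall : ∀ t, i ≤ t → t < j → l.getD t false = l.getD (t+1) false) :
    l.eraseIdx i = l.eraseIdx j := by
  induction j, hij using Nat.le_induction with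
  | base => rfl
  | succ j hij ih =>
    rw [ih (by omega) (fun t h1 h2 => hall t h1 (by omega))]
    exact eraseIdx_step l j hj (hall j hij (by omega))

lemma castInj {n a b : ℕ} (ha : a < n) (hb : b < n) (h : (a : ZMod n) = (b : ZMod n)) :
    a = b := by
  haveI : NeZero n := ⟨by omega⟩
  have := congrArg ZMod.val h
  rwa [ZMod.val_cast_of_lt ha, ZMod.val_cast_of_lt hb] at this

lemma key_erase_le (n : ℕ) (x : List Bool) (hx : x.length = n) (i j : ℕ) (hij : i ≤ j)
    (hjn : j < n)
    (h : ((vtSyn (x.eraseIdx i) : ℕ) : ZMod n) = ((vtSyn (x.eraseIdx j) : ℕ) : ZMod n)) :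
    x.eraseIdx i = x.eraseIdx j := by
  rcases Nat.eq_or_lt_of_le hij with rfl | hlt
  · rfl
  have hi : i < x.length := by omega
  have hj : j < x.length := by omega
  have e1 := vtSyn_eraseIdx x i hi
  have e2 := vtSyn_eraseIdx x j hj
  have hsplit := drop_split x (i+1) (j+1) (by omega)
  rw [show j + 1 - (i+1) = j - i from by omega] at hsplit
  set m := cnt ((x.drop (i+1)).take (j - i)) with hmdef
  have hlenseg : ((x.drop (i+1)).take (j - i)).length = j - i := by
    simp only [List.length_take, List.length_drop]
    omega
  have hmle : m ≤ j - i := by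
    have := cnt_le_length ((x.drop (i+1)).take (j - i))
    omega
  have c1 := congrArg (Nat.cast (R := ZMod n)) e1
  have c2 := congrArg (Nat.cast (R := ZMod n)) e2
  have c3 := congrArg (Nat.cast (R := ZMod n)) hsplit
  push_cast at c1 c2 c3
  have E : ((i : ZMod n) + 1) * ((bitN (x.getD i false) : ℕ) : ZMod n) + ((m : ℕ) : ZMod n)
      = ((j : ZMod n) + 1) * ((bitN (x.getD j false) : ℕ) : ZMod n) := by
    linear_combination c2 - c1 - h - c3
  have h0n : 0 < n := by omega
  -- helper for "all entries of the segment are true"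
  have segtrue : m = j - i → ∀ t, i + 1 ≤ t → t ≤ j → x.getD t false = true := by
    intro hm t h1 h2
    have hfull : cnt ((x.drop (i+1)).take (j - i)) = ((x.drop (i+1)).take (j - i)).length := by
      omega
    have hgd := getD_take_drop x (i+1) (j - i) (t - (i+1)) (by omega)
    rw [show i + 1 + (t - (i+1)) = t from by omega] at hgd
    rw [← hgd]
    exact getD_true_of_cnt_len hfull _ (by omega)
  have segfalse : m = 0 → ∀ t, i + 1 ≤ t → t ≤ j → x.getD t false = false := by
    intro hm t h1 h2
    have hgd := getD_take_drop x (i+1) (j - i) (t - (i+1)) (by omega)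
    rw [show i + 1 + (t - (i+1)) = t from by omega] at hgd
    rw [← hgd]
    exact getD_false_of_cnt_zero hm _
  cases hBi : x.getD i false <;> cases hBj : x.getD j false <;> rw [hBi, hBj] at E <;>
    norm_num [bitN] at E
  · -- false, false : E : (m : ZMod n) = 0
    have hm0 : m = 0 := castInj (n := n) (by omega) h0n (by simpa using E)
    have hall : ∀ t, i ≤ t → t ≤ j → x.getD t false = false := by
      intro t h1 h2
      rcases Nat.eq_or_lt_of_le h1 with rfl | h1'
      · exact hBi
      · exact segfalse hm0 t (by omega) h2
    exact eraseIdx_congr x i j hij hj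
      (fun t h1 h2 => by rw [hall t h1 (by omega), hall (t+1) (by omega) (by omega)])
  · -- false, true : E : m = j + 1 (in ZMod n)
    by_cases hc : j + 1 < n
    · have : m = j + 1 := castInj (n := n) (by omega) hc (by push_cast; linear_combination E)
      omega
    · have hj1 : ((j + 1 : ℕ) : ZMod n) = 0 := by
        rw [show j + 1 = n from by omega]; exact ZMod.natCast_self n
      push_cast at hj1
      have hm0 : m = 0 := castInj (n := n) (by omega) h0n
        (by push_cast; linear_combination E + hj1)
      have hgd := getD_take_drop x (i+1) (j - i) (j - (i+1)) (by omega)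
      rw [show i + 1 + (j - (i+1)) = j from by omega] at hgd
      have : (1 : ℕ) ≤ m := one_le_cnt (p := j - (i+1)) (by rw [hgd]; exact hBj)
      omega
  · -- true, false : E : (i+1) + m = 0 (in ZMod n)
    by_cases hc : i + 1 + m < n
    · have : i + 1 + m = 0 := castInj (n := n) hc h0n (by push_cast; linear_combination E)
      omega
    · have hm : m = j - i := by omega
      have := segtrue hm j (by omega) le_rfl
      exact absurd (hBj.symm.trans this) Bool.false_ne_true
  · -- true, true : E : (i+1) + m = j + 1
    have hsum : i + m = j :=
      castInj (n := n) (by omega) (by omega) (by push_cast; linear_combination E)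
    have hall : ∀ t, i ≤ t → t ≤ j → x.getD t false = true := by
      intro t h1 h2
      rcases Nat.eq_or_lt_of_le h1 with rfl | h1'
      · exact hBi
      · exact segtrue (by omega) t (by omega) h2
    exact eraseIdx_congr x i j hij hj
      (fun t h1 h2 => by rw [hall t h1 (by omega), hall (t+1) (by omega) (by omega)])

lemma key_insert_le (n : ℕ) (x : List Bool) (hx : x.length + 2 = n) (i j : ℕ) (hij : i ≤ j)
    (hj : j ≤ x.length) (b c : Bool)
    (h : ((vtSyn (x.insertIdx i b) : ℕ) : ZMod n) = ((vtSyn (x.insertIdx j c) : ℕ) : ZMod n)) :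
    x.insertIdx i b = x.insertIdx j c := by
  have hi : i ≤ x.length := by omega
  have e1 := vtSyn_insertIdx_s4 x b i hi
  have e2 := vtSyn_insertIdx_s4 x c j hj
  have hsplit := drop_split x i j hij
  set m := cnt ((x.drop i).take (j - i)) with hmdef
  have hlenseg : ((x.drop i).take (j - i)).length = j - i := by
    simp only [List.length_take, List.length_drop]
    omega
  have hmle : m ≤ j - i := by
    have := cnt_le_length ((x.drop i).take (j - i))
    omega
  have c1 := congrArg (Nat.cast (R := ZMod n)) e1
  have c2 := congrArg (Nat.cast (R := ZMod n)) e2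
  have c3 := congrArg (Nat.cast (R := ZMod n)) hsplit
  push_cast at c1 c2 c3
  have E : ((i : ZMod n) + 1) * ((bitN b : ℕ) : ZMod n) + ((m : ℕ) : ZMod n)
      = ((j : ZMod n) + 1) * ((bitN c : ℕ) : ZMod n) := by
    linear_combination h - c1 + c2 - c3
  have h0n : 0 < n := by omega
  have segtrue : m = j - i → ∀ t, i ≤ t → t < j → x.getD t false = true := by
    intro hm t h1 h2
    have hfull : cnt ((x.drop i).take (j - i)) = ((x.drop i).take (j - i)).length := by
      omega
    have hgd := getD_take_drop x i (j - i) (t - i) (by omega)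
    rw [show i + (t - i) = t from by omega] at hgd
    rw [← hgd]
    exact getD_true_of_cnt_len hfull _ (by omega)
  have segfalse : m = 0 → ∀ t, i ≤ t → t < j → x.getD t false = false := by
    intro hm t h1 h2
    have hgd := getD_take_drop x i (j - i) (t - i) (by omega)
    rw [show i + (t - i) = t from by omega] at hgd
    rw [← hgd]
    exact getD_false_of_cnt_zero hm _
  cases b <;> cases c <;> norm_num [bitN] at E
  · -- false, false : E : m ≡ 0
    have hm0 : m = 0 := castInj (n := n) (by omega) h0n (by simpa using E)
    exact insertIdx_congr x false i j hij hj (fun t h1 h2 => segfalse hm0 t h1 h2)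
  · -- false, true : E : m ≡ j + 1
    have : m = j + 1 := castInj (n := n) (by omega) (by omega)
      (by push_cast; linear_combination E)
    omega
  · -- true, false : E : (i+1) + m ≡ 0
    have : i + 1 + m = 0 := castInj (n := n) (by omega) h0n
      (by push_cast; linear_combination E)
    omega
  · -- true, true : E : (i+1) + m ≡ j + 1
    have hsum : i + m = j := castInj (n := n) (by omega) (by omega)
      (by push_cast; linear_combination E)
    exact insertIdx_congr x true i j hij hj (fun t h1 h2 => segtrue (by omega) t h1 h2)

lemma key_erase (n : ℕ) (x : List Bool) (hx : x.length = n) (i j : ℕ)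
    (hi : i < n) (hj : j < n)
    (h : ((vtSyn (x.eraseIdx i) : ℕ) : ZMod n) = ((vtSyn (x.eraseIdx j) : ℕ) : ZMod n)) :
    x.eraseIdx i = x.eraseIdx j := by
  rcases le_total i j with hij | hij
  · exact key_erase_le n x hx i j hij hj h
  · exact (key_erase_le n x hx j i hij hi h.symm).symm

lemma key_insert (n : ℕ) (x : List Bool) (hx : x.length + 2 = n) (i j : ℕ)
    (hi : i ≤ x.length) (hj : j ≤ x.length) (b c : Bool)
    (h : ((vtSyn (x.insertIdx i b) : ℕ) : ZMod n) = ((vtSyn (x.insertIdx j c) : ℕ) : ZMod n)) :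
    x.insertIdx i b = x.insertIdx j c := by
  rcases le_total i j with hij | hij
  · exact key_insert_le n x hx i j hij hj b c h
  · exact (key_insert_le n x hx j i hij hi c b h.symm).symm

theorem stmt4 (k : ℕ) (hk : 0 < k) (a : ZMod (k + 1)) (u w : List Bool)
    (hu : u.length = k) (hw : w.length = k)
    (hua : ((vtSyn u : ℕ) : ZMod (k + 1)) = a)
    (hwa : ((vtSyn w : ℕ) : ZMod (k + 1)) = a)
    (hne : u ≠ w) :
    insdelBall u ∩ insdelBall w = ∅ := by
  apply Set.eq_empty_iff_forall_notMem.mpr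
  rintro x ⟨hxu, hxw⟩
  simp only [insdelBall, Set.mem_setOf_eq] at hxu hxw
  have hsyn : ((vtSyn u : ℕ) : ZMod (k+1)) = ((vtSyn w : ℕ) : ZMod (k+1)) := hua.trans hwa.symm
  obtain h1 | ⟨i, hi, h1⟩ | ⟨i, hi, b, h1⟩ := hxu <;>
    obtain h2 | ⟨j, hj, h2⟩ | ⟨j, hj, c, h2⟩ := hxw
  · exact hne (h1.symm.trans h2)
  · have hl := congrArg List.length (h1.symm.trans h2)
    rw [List.length_eraseIdx, if_pos hj, hu, hw] at hl
    omega
  · have hl := congrArg List.length (h1.symm.trans h2)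
    rw [List.length_insertIdx_of_le_length hj, hu, hw] at hl
    omega
  · have hl := congrArg List.length (h2.symm.trans h1)
    rw [List.length_eraseIdx, if_pos hi, hu, hw] at hl
    omega
  · -- both deletions
    have hu1 : x.insertIdx i (u.getD i false) = u := by
      rw [h1]; exact insertIdx_eraseIdx_getD u i hi
    have hw1 : x.insertIdx j (w.getD j false) = w := by
      rw [h2]; exact insertIdx_eraseIdx_getD w j hj
    have hxlen : x.length = k - 1 := by
      rw [h1, List.length_eraseIdx, if_pos hi, hu]
    have heq : x.insertIdx i (u.getD i false) = x.insertIdx j (w.getD j false) := by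
      apply key_insert (k+1) x (by omega) i j (by omega) (by omega)
      rw [hu1, hw1]; exact hsyn
    exact hne (hu1.symm.trans (heq.trans hw1))
  · have hl := congrArg List.length (h1.symm.trans h2)
    rw [List.length_eraseIdx, if_pos hi, List.length_insertIdx_of_le_length hj, hu, hw] at hl
    omega
  · have hl := congrArg List.length (h2.symm.trans h1)
    rw [List.length_insertIdx_of_le_length hi, hu, hw] at hl
    omega
  · have hl := congrArg List.length (h2.symm.trans h1)
    rw [List.length_eraseIdx, if_pos hj, List.length_insertIdx_of_le_length hi, hu, hw] at hl
    omega
  · -- both insertions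
    have hu1 : x.eraseIdx i = u := by
      rw [h1]; exact eraseIdx_insertIdx' u b i hi
    have hw1 : x.eraseIdx j = w := by
      rw [h2]; exact eraseIdx_insertIdx' w c j hj
    have hxlen : x.length = k + 1 := by
      rw [h1, List.length_insertIdx_of_le_length hi, hu]
    have heq : x.eraseIdx i = x.eraseIdx j := by
      apply key_erase (k+1) x hxlen i j (by omega) (by omega)
      rw [hu1, hw1]; exact hsyn
    exact hne (hu1.symm.trans (heq.trans hw1))
end

section
/- Let v ∈ VT_a(2k;k) with 0 < wt_H(v) < k and k ≥ 2. Then the left-shift u = v₂…v_k1 and the right-shift u' = 0v₁…v_{k−1} cannot both lie in VT_a(2k;k). In fact, at most one of the congruences (k − wt_H(v)) ≡ 0 (mod 2k) and (wt_H(v) − (k+1)v_k) ≡ 0 (mod 2k) can hold. -/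
/-!
The left shift `u = v₂ … vₖ 1` raises the syndrome by `k - wt_H(v)`, which lies strictly between
`0` and `2k`. Hence `u` is never in `VT_a(2k;k)`, and the first of the two congruences fails.
-/

/-- VT syndrome (as an integer sum) of a binary list. -/
def vtSynZ (l : List Bool) : ℤ :=
  ∑ i : Fin l.length, (((i : ℕ) + 1 : ℕ) : ℤ) * (if l.get i then 1 else 0)

lemma sum_ite_get_eq_count_true (l : List Bool) :
    ∑ i : Fin l.length, (if l.get i then (1 : ℤ) else 0) = l.count true := by
  induction l with
  | nil => simp
  | cons x l ih =>
    simp only [List.get_eq_getElem] at ih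
    simp only [List.get_eq_getElem, List.length_cons, Fin.sum_univ_succ, Fin.val_zero,
      Fin.val_succ, List.getElem_cons_zero, List.getElem_cons_succ, ih, List.count_cons]
    cases x <;> simp [add_comm]

/-- Prepending a letter shifts every position by one, adding the weight of the tail. -/
lemma vtSynZ_cons (x : Bool) (l : List Bool) :
    vtSynZ (x :: l) = (if x then 1 else 0) + vtSynZ l + l.count true := by
  rw [vtSynZ, vtSynZ, ← sum_ite_get_eq_count_true, add_assoc, ← Finset.sum_add_distrib]
  simp only [List.get_eq_getElem, List.length_cons, Fin.sum_univ_succ, Fin.val_zero, Fin.val_succ,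
    List.getElem_cons_zero, List.getElem_cons_succ]
  congr 1
  · cases x <;> simp
  · refine Finset.sum_congr rfl fun i _ => ?_
    push_cast
    ring

lemma vtSynZ_append_singleton (l : List Bool) (x : Bool) :
    vtSynZ (l ++ [x]) = vtSynZ l + (l.length + 1) * (if x then 1 else 0) := by
  induction l with
  | nil => simp [vtSynZ]
  | cons y l ih =>
    rw [List.cons_append, vtSynZ_cons, vtSynZ_cons, ih, List.count_append]
    cases x <;> simp; ring

lemma vtSynZ_tail_append_true {l : List Bool} (hl : l ≠ []) :
    vtSynZ (l.tail ++ [true]) = vtSynZ l + (l.length - l.count true) := by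
  obtain ⟨x, l, rfl⟩ := List.exists_cons_of_ne_nil hl
  rw [List.tail_cons, vtSynZ_append_singleton, vtSynZ_cons, List.count_cons]
  cases x <;> simp; ring

lemma not_modEq_zero_of_pos_of_lt {d n : ℤ} (hd : 0 < d) (hdn : d < n) : ¬ d ≡ 0 [ZMOD n] :=
  fun h => hd.ne' (Int.eq_zero_of_dvd_of_nonneg_of_lt hd.le hdn (Int.modEq_zero_iff_dvd.mp h))

theorem stmt17_general (k : ℕ) (v : List Bool) (hlen : v.length = k) (a : ℤ)
    (hw' : v.count true < k)
    (hv : vtSynZ v ≡ a [ZMOD (2 * k : ℕ)])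
    (u u' : List Bool) (hu : u = v.tail ++ [true]) :
    ¬ (vtSynZ u ≡ a [ZMOD (2 * k : ℕ)] ∧ vtSynZ u' ≡ a [ZMOD (2 * k : ℕ)]) ∧
    ¬ (((k : ℤ) - v.count true ≡ 0 [ZMOD (2 * k : ℕ)]) ∧
       ((v.count true : ℤ) - ((k : ℤ) + 1) * (if v.getLast! then 1 else 0) ≡ 0
          [ZMOD (2 * k : ℕ)])) := by
  have hv_ne : v ≠ [] := by
    rintro rfl
    simp [← hlen] at hw'
  have hgap : ¬ (k : ℤ) - v.count true ≡ 0 [ZMOD (2 * k : ℕ)] :=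
    not_modEq_zero_of_pos_of_lt (by omega) (by push_cast; omega)
  refine ⟨fun ⟨hu_mem, _⟩ => hgap ?_, fun ⟨h, _⟩ => hgap h⟩
  have hshift := hu_mem.trans hv.symm
  rw [hu, vtSynZ_tail_append_true hv_ne, hlen, Int.add_modEq_left_iff] at hshift
  exact Int.modEq_zero_iff_dvd.mpr hshift

theorem stmt17 (k : ℕ) (hk : 2 ≤ k) (v : List Bool) (hlen : v.length = k) (a : ℤ)
    (hw : 0 < v.count true) (hw' : v.count true < k)
    (hv : vtSynZ v ≡ a [ZMOD (2 * k : ℕ)])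
    (u u' : List Bool) (hu : u = v.tail ++ [true]) (hu' : u' = false :: v.dropLast) :
    ¬ (vtSynZ u ≡ a [ZMOD (2 * k : ℕ)] ∧ vtSynZ u' ≡ a [ZMOD (2 * k : ℕ)]) ∧
    ¬ (((k : ℤ) - v.count true ≡ 0 [ZMOD (2 * k : ℕ)]) ∧
       ((v.count true : ℤ) - ((k : ℤ) + 1) * (if v.getLast! then 1 else 0) ≡ 0
          [ZMOD (2 * k : ℕ)])) :=
  stmt17_general k v hlen a hw' hv u u' hu
end
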